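/- arXiv:2004.12101 — 3 statements merged into one kernel-verified Lean document; each statement's English description precedes it below -/
import Mathlib

section
/- Let K be a field of characteristic zero, E the infinite-dimensional Grassmann algebra over K with even part E₀ and odd part E₁. For any A ∈ M₂(E₀) and B ∈ M₂(E₁), the ℤ₂-graded Cayley–Hamilton trace identity holds: (½·tr(B)·tr(A) + ½·tr(A)·tr(B) − ½·tr(AB) − ½·tr(BA))·I₂ − tr(B)·A − tr(A)·B + AB + BA = 0. -/
open Matrix

section aux

variable {R M : Type*} [CommRing R] [AddCommGroup M] [Module R M]

private lemma grassmann_ii_commute (m₁ m₂ : M)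
    (y : CliffordAlgebra (0 : QuadraticForm R M)) :
    Commute (CliffordAlgebra.ι (0 : QuadraticForm R M) m₁ *
      CliffordAlgebra.ι (0 : QuadraticForm R M) m₂) y := by
  induction y using CliffordAlgebra.induction with
  | algebraMap r => exact (Algebra.commutes r _).symm
  | ι m =>
      have h : ∀ a b : M, CliffordAlgebra.ι (0 : QuadraticForm R M) a *
          CliffordAlgebra.ι (0 : QuadraticForm R M) b =
          -(CliffordAlgebra.ι (0 : QuadraticForm R M) b *
            CliffordAlgebra.ι (0 : QuadraticForm R M) a) := fun a b =>
        CliffordAlgebra.ι_mul_ι_comm_of_isOrtho (by simp [QuadraticMap.IsOrtho])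
      show _ = _
      rw [mul_assoc, h m₂ m, mul_neg, ← mul_assoc, h m₁ m, neg_mul, neg_neg, mul_assoc]
  | mul x y hx hy => exact hx.mul_right hy
  | add x y hx hy => exact hx.add_right hy

private lemma grassmann_even_central {x : CliffordAlgebra (0 : QuadraticForm R M)}
    (hx : x ∈ CliffordAlgebra.evenOdd (0 : QuadraticForm R M) 0)
    (y : CliffordAlgebra (0 : QuadraticForm R M)) : Commute x y := by
  induction x, hx using CliffordAlgebra.even_induction with
  | algebraMap r => exact (Algebra.commutes r _)
  | add a b ha hb iha ihb => exact iha.add_left ihb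
  | ι_mul_ι_mul m₁ m₂ a ha iha => exact (grassmann_ii_commute m₁ m₂ y).mul_left iha

private lemma grassmann_CH_abstract {K S : Type*} [Field K] [CharZero K] [Ring S] [Algebra K S]
    (A B : Matrix (Fin 2) (Fin 2) S)
    (hc : ∀ i j k l, B k l * A i j = A i j * B k l) :
    ((2 : K)⁻¹ • (B.trace * A.trace) + (2 : K)⁻¹ • (A.trace * B.trace)
        - (2 : K)⁻¹ • (A * B).trace - (2 : K)⁻¹ • (B * A).trace)
      • (1 : Matrix (Fin 2) (Fin 2) S)
      - B.trace • A - A.trace • B + A * B + B * A = 0 := by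
  have half : ∀ x : S, (2 : K)⁻¹ • x + (2 : K)⁻¹ • x = x := by
    intro x
    rw [← add_smul, ← two_mul, mul_inv_cancel₀ (two_ne_zero), one_smul]
  have hTT : B.trace * A.trace = A.trace * B.trace := by
    simp only [Matrix.trace, Matrix.diag, Fin.sum_univ_two, mul_add, add_mul, hc]
    abel
  have hTr : (B * A).trace = (A * B).trace := by
    simp only [Matrix.trace, Matrix.diag, Matrix.mul_apply, Fin.sum_univ_two, hc]
    abel
  have hs : ((2 : K)⁻¹ • (B.trace * A.trace) + (2 : K)⁻¹ • (A.trace * B.trace)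
        - (2 : K)⁻¹ • (A * B).trace - (2 : K)⁻¹ • (B * A).trace)
      = A.trace * B.trace - (A * B).trace := by
    rw [hTT, hTr, half, sub_sub, half]
  rw [hs]
  ext i j
  fin_cases i <;> fin_cases j <;>
    simp only [Matrix.add_apply, Matrix.sub_apply, Matrix.smul_apply, Matrix.one_apply,
      Matrix.zero_apply, Matrix.trace, Matrix.diag, Matrix.mul_apply, Fin.sum_univ_two,
      smul_eq_mul, Fin.isValue, Fin.zero_eta, Fin.mk_one, if_true, if_false,
      ne_eq, one_ne_zero, not_false_eq_true, zero_ne_one, ite_true, ite_false,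
      mul_one, mul_zero] <;>
    simp only [mul_add, add_mul, hc, sub_mul, mul_sub] <;>
    abel

end aux

/-- The ℤ₂-graded Cayley–Hamilton trace identity for `A ∈ M₂(E₀)`, `B ∈ M₂(E₁)`,
where `E` is the infinite-dimensional Grassmann (exterior) algebra over a field `K`
of characteristic zero. -/
theorem grassmann_graded_CH_n2
    {K : Type*} [Field K] [CharZero K]
    (A B : Matrix (Fin 2) (Fin 2) (ExteriorAlgebra K (ℕ →₀ K)))
    (hA : ∀ i j, A i j ∈ CliffordAlgebra.evenOdd (0 : QuadraticForm K (ℕ →₀ K)) 0)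
    (hB : ∀ i j, B i j ∈ CliffordAlgebra.evenOdd (0 : QuadraticForm K (ℕ →₀ K)) 1) :
    ((2 : K)⁻¹ • (B.trace * A.trace) + (2 : K)⁻¹ • (A.trace * B.trace)
        - (2 : K)⁻¹ • (A * B).trace - (2 : K)⁻¹ • (B * A).trace)
      • (1 : Matrix (Fin 2) (Fin 2) (ExteriorAlgebra K (ℕ →₀ K)))
      - B.trace • A - A.trace • B + A * B + B * A = 0 :=
  grassmann_CH_abstract A B
    (fun i j k l => (grassmann_even_central (hA i j) (B k l)).symm.eq)
end

section
/- Let E be the infinite-dimensional Grassmann algebra over a field K of characteristic zero. For any B ∈ M₂(E₁) (a 2×2 matrix with odd Grassmann entries), the identity (tr(B)·tr(B²) − tr(B³))·I₂ − tr(B²)·B − tr(B)·B² + 2B³ = 0 holds. -/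
open Matrix

section Aux
open CliffordAlgebra

variable {K : Type*} [Field K] {M : Type*} [AddCommGroup M] [Module K M]

lemma ι_mul_odd (m : M) {y : ExteriorAlgebra K M}
    (hy : y ∈ evenOdd (0 : QuadraticForm K M) 1) :
    ι (0 : QuadraticForm K M) m * y = -(y * ι (0 : QuadraticForm K M) m) := by
  set Q : QuadraticForm K M := 0 with hQ
  have key : ∀ u v : M, ι Q u * ι Q v = -(ι Q v * ι Q u) := by
    intro u v
    have h := ι_mul_ι_add_swap (Q := Q) u v
    have hp : QuadraticMap.polar Q u v = 0 := by simp [QuadraticMap.polar, hQ]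
    rw [hp, map_zero] at h
    exact eq_neg_of_add_eq_zero_left h
  induction y, hy using odd_induction with
  | ι v => exact key m v
  | add x y hx hy ihx ihy => rw [mul_add, add_mul, ihx, ihy, neg_add]
  | ι_mul_ι_mul a b x hx ih =>
    have hz : ι Q m * (ι Q a * ι Q b) = (ι Q a * ι Q b) * ι Q m := by
      rw [← mul_assoc, key m a, neg_mul, mul_assoc, key m b, mul_neg, neg_neg, mul_assoc]
    rw [← mul_assoc, hz, mul_assoc, ih, mul_neg, ← mul_assoc]

lemma odd_anticomm {x y : ExteriorAlgebra K M}
    (hx : x ∈ evenOdd (0 : QuadraticForm K M) 1)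
    (hy : y ∈ evenOdd (0 : QuadraticForm K M) 1) :
    x * y = -(y * x) := by
  set Q : QuadraticForm K M := 0 with hQ
  induction x, hx using odd_induction with
  | ι v => exact ι_mul_odd v hy
  | add x x' hx hx' ihx ihx' => rw [add_mul, mul_add, ihx, ihx', neg_add]
  | ι_mul_ι_mul a b x hx ih =>
    have hya : y * ι Q a = -(ι Q a * y) := by rw [ι_mul_odd a hy, neg_neg]
    have hyb : y * ι Q b = -(ι Q b * y) := by rw [ι_mul_odd b hy, neg_neg]
    have hz : y * (ι Q a * ι Q b) = (ι Q a * ι Q b) * y := by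
      rw [← mul_assoc, hya, neg_mul, mul_assoc, hyb, mul_neg, neg_neg, mul_assoc]
    rw [mul_assoc, ih, mul_neg, ← mul_assoc, ← mul_assoc, hz]

lemma odd_sq_zero [CharZero K] {x : ExteriorAlgebra K M}
    (hx : x ∈ evenOdd (0 : QuadraticForm K M) 1) : x * x = 0 := by
  have h := odd_anticomm hx hx
  have h2 : (2 : K) • (x * x) = 0 := by
    rw [two_smul]
    nth_rewrite 1 [h]
    abel
  rcases smul_eq_zero.mp h2 with h | h
  · exact absurd h two_ne_zero
  · exact h

end Aux

set_option maxHeartbeats 1000000 in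
/-- For `B ∈ M₂(E₁)` (odd Grassmann entries), the graded Cayley–Hamilton trace identity
`(tr(B)tr(B²) − tr(B³))·I₂ − tr(B²)·B − tr(B)·B² + 2B³ = 0` holds. -/
theorem grassmann_odd_CH_n2
    {K : Type*} [Field K] [CharZero K]
    (B : Matrix (Fin 2) (Fin 2) (ExteriorAlgebra K (ℕ →₀ K)))
    (hB : ∀ i j, B i j ∈ CliffordAlgebra.evenOdd (0 : QuadraticForm K (ℕ →₀ K)) 1) :
    (B.trace * (B ^ 2).trace - (B ^ 3).trace)
      • (1 : Matrix (Fin 2) (Fin 2) (ExteriorAlgebra K (ℕ →₀ K)))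
      - (B ^ 2).trace • B - B.trace • (B ^ 2) + 2 • B ^ 3 = 0 := by
  set a := B 0 0 with ha
  set b := B 0 1 with hb
  set c := B 1 0 with hc
  set d := B 1 1 with hd
  have anti : ∀ x y : ExteriorAlgebra K (ℕ →₀ K),
      x ∈ CliffordAlgebra.evenOdd (0 : QuadraticForm K (ℕ →₀ K)) 1 →
      y ∈ CliffordAlgebra.evenOdd (0 : QuadraticForm K (ℕ →₀ K)) 1 →
      x * y = -(y * x) := fun _ _ hx hy => odd_anticomm hx hy
  have swap' : ∀ x y z : ExteriorAlgebra K (ℕ →₀ K), x * y = -(y * x) →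
      x * (y * z) = -(y * (x * z)) := by
    intro x y z h
    rw [← mul_assoc, h, neg_mul, mul_assoc]
  have sqz' : ∀ x z : ExteriorAlgebra K (ℕ →₀ K), x * x = 0 → x * (x * z) = 0 := by
    intro x z h
    rw [← mul_assoc, h, zero_mul]
  have hba : b * a = -(a * b) := anti _ _ (hB 0 1) (hB 0 0)
  have hca : c * a = -(a * c) := anti _ _ (hB 1 0) (hB 0 0)
  have hda : d * a = -(a * d) := anti _ _ (hB 1 1) (hB 0 0)
  have hcb : c * b = -(b * c) := anti _ _ (hB 1 0) (hB 0 1)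
  have hdb : d * b = -(b * d) := anti _ _ (hB 1 1) (hB 0 1)
  have hdc : d * c = -(c * d) := anti _ _ (hB 1 1) (hB 1 0)
  have haa : a * a = 0 := odd_sq_zero (hB 0 0)
  have hbb : b * b = 0 := odd_sq_zero (hB 0 1)
  have hcc : c * c = 0 := odd_sq_zero (hB 1 0)
  have hdd : d * d = 0 := odd_sq_zero (hB 1 1)
  have hba' := fun z => swap' b a z hba
  have hca' := fun z => swap' c a z hca
  have hda' := fun z => swap' d a z hda
  have hcb' := fun z => swap' c b z hcb
  have hdb' := fun z => swap' d b z hdb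
  have hdc' := fun z => swap' d c z hdc
  have haa' := fun z => sqz' a z haa
  have hbb' := fun z => sqz' b z hbb
  have hcc' := fun z => sqz' c z hcc
  have hdd' := fun z => sqz' d z hdd
  rw [pow_three, sq]
  rw [Matrix.eta_fin_two B, ← ha, ← hb, ← hc, ← hd]
  simp only [Matrix.mul_fin_two, Matrix.trace_fin_two_of, Matrix.one_fin_two,
    Matrix.smul_of, Matrix.smul_cons, Matrix.smul_empty, smul_eq_mul,
    Matrix.sub_apply, Matrix.of_sub_of, Matrix.of_add_of, Matrix.sub_cons,
    Matrix.add_cons, Matrix.head_cons, Matrix.tail_cons, Matrix.empty_sub_empty,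
    Matrix.empty_add_empty, two_smul]
  ext i j
  fin_cases i <;> fin_cases j <;>
  · simp only [Matrix.cons_val', Matrix.cons_val_zero, Matrix.cons_val_one,
      Matrix.head_cons, Matrix.head_fin_const, Matrix.empty_val',
      Matrix.cons_val_fin_one, Matrix.of_apply, Matrix.zero_apply, Fin.zero_eta,
      Fin.mk_one, Fin.isValue]
    simp only [mul_add, add_mul, mul_neg, neg_mul, neg_neg, mul_assoc, mul_zero,
      zero_mul, mul_one, one_mul]
    simp only [hba, hca, hda, hcb, hdb, hdc, haa, hbb, hcc, hdd,
      hba', hca', hda', hcb', hdb', hdc', haa', hbb', hcc', hdd',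
      mul_neg, neg_mul, neg_neg, mul_zero, zero_mul, mul_add, add_mul, neg_add,
      mul_one, one_mul, neg_zero, add_zero, zero_add]
    abel
end

section
/- Let E = E₀ ⊕ E₁ be the infinite-dimensional Grassmann algebra over a field K of characteristic zero. For any A ∈ M₂(E₀) and B ∈ M₂(E₁), tr(AB) = tr(BA) and hence the graded Cayley–Hamilton identity for n = 2 can be written as (tr(A)tr(B) − tr(AB))·I₂ − tr(B)·A − tr(A)·B + AB + BA = 0. -/
open Matrix

lemma ext_ι_swap {K M : Type*} [Field K] [AddCommGroup M] [Module K M]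
    (a b : M) : ExteriorAlgebra.ι K a * ExteriorAlgebra.ι K b
      = -(ExteriorAlgebra.ι K b * ExteriorAlgebra.ι K a) :=
  eq_neg_of_add_eq_zero_left (ExteriorAlgebra.ι_add_mul_swap a b)

lemma ιι_central {K M : Type*} [Field K] [AddCommGroup M] [Module K M]
    (a b : M) (y : ExteriorAlgebra K M) :
    ExteriorAlgebra.ι K a * ExteriorAlgebra.ι K b * y
      = y * (ExteriorAlgebra.ι K a * ExteriorAlgebra.ι K b) := by
  induction y using CliffordAlgebra.induction with
  | algebraMap r => rw [← Algebra.commutes]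
  | ι m =>
      rw [mul_assoc, ext_ι_swap b m, mul_neg, ← mul_assoc, ext_ι_swap a m,
        neg_mul, neg_neg, mul_assoc]
  | mul x y hx hy => rw [← mul_assoc, hx, mul_assoc, hy, ← mul_assoc]
  | add x y hx hy => rw [mul_add, add_mul, hx, hy]

lemma even_central {K M : Type*} [Field K] [AddCommGroup M] [Module K M]
    (x : ExteriorAlgebra K M)
    (hx : x ∈ CliffordAlgebra.evenOdd (0 : QuadraticForm K M) 0)
    (y : ExteriorAlgebra K M) : y * x = x * y := by
  refine CliffordAlgebra.even_induction (Q := (0 : QuadraticForm K M))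
    (motive := fun x _ => ∀ y, y * x = x * y) (fun r y => ?_)
    (fun x₁ x₂ _ _ h1 h2 y => ?_) (fun m₁ m₂ x _ h y => ?_) x hx y
  · rw [Algebra.commutes]
  · rw [mul_add, add_mul, h1, h2]
  · rw [← mul_assoc, ← ιι_central, mul_assoc, mul_assoc, h, ← mul_assoc, ← mul_assoc]

/-- For `A ∈ M₂(E₀)` and `B ∈ M₂(E₁)`, `tr(AB) = tr(BA)`, and hence the graded
Cayley–Hamilton identity for `n = 2` takes the form
`(tr(A)tr(B) − tr(AB))·I₂ − tr(B)·A − tr(A)·B + AB + BA = 0`. -/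
theorem grassmann_graded_CH_n2_simplified
    {K : Type*} [Field K] [CharZero K]
    (A B : Matrix (Fin 2) (Fin 2) (ExteriorAlgebra K (ℕ →₀ K)))
    (hA : ∀ i j, A i j ∈ CliffordAlgebra.evenOdd (0 : QuadraticForm K (ℕ →₀ K)) 0)
    (hB : ∀ i j, B i j ∈ CliffordAlgebra.evenOdd (0 : QuadraticForm K (ℕ →₀ K)) 1) :
    (A * B).trace = (B * A).trace ∧
    (A.trace * B.trace - (A * B).trace)
        • (1 : Matrix (Fin 2) (Fin 2) (ExteriorAlgebra K (ℕ →₀ K)))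
      - B.trace • A - A.trace • B + A * B + B * A = 0 := by
  have hc : ∀ (i j : Fin 2) (y : ExteriorAlgebra K (ℕ →₀ K)), y * A i j = A i j * y :=
    fun i j y => even_central _ (hA i j) y
  constructor
  · simp only [Matrix.trace, Matrix.diag, Matrix.mul_apply, Fin.sum_univ_two]
    simp only [hc]
    abel
  · ext i j
    fin_cases i <;> fin_cases j <;>
      simp only [Matrix.trace, Matrix.diag, Matrix.mul_apply, Fin.sum_univ_two,
        Matrix.add_apply, Matrix.sub_apply, Matrix.smul_apply, Matrix.one_apply,
        Matrix.zero_apply, smul_eq_mul, Fin.mk_zero, Fin.mk_one, mul_one, mul_zero,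
        reduceIte] <;>
      simp only [hc] <;> noncomm_ring <;> simp
end
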